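/- arXiv:1902.06187 — 3 statements merged into one kernel-verified Lean document; each statement's English description precedes it below -/
import Mathlib

section
/- Let λ1 < λ2 and μ1 ≠ μ2 be real numbers, let c ∈ ℝ, and set t = (c − μ2(λ1 + λ2))/(μ1 − μ2). Assume λ1 < t < λ2 (this is exactly the condition that c is a regular value of f with nonempty level set). Then the level set f⁻¹(c) = { A : A is a 2×2 complex Hermitian matrix, the spectrum of A is {λ1, λ2}, and μ1·A₀₀ + μ2·A₁₁ = c } is homeomorphic to the unit circle {z ∈ ℂ : |z| = 1}; in particular it is a compact one-dimensional manifold. -/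
open Matrix Complex

lemma aux_spec (A : Matrix (Fin 2) (Fin 2) ℂ) (k : ℂ) :
    k ∈ spectrum ℂ A ↔ (k - A 0 0) * (k - A 1 1) - A 0 1 * A 1 0 = 0 := by
  rw [spectrum.mem_iff, Matrix.isUnit_iff_isUnit_det, isUnit_iff_ne_zero, not_ne_iff,
    Matrix.det_fin_two]
  simp [Matrix.algebraMap_matrix_apply]

lemma aux_key (l1 l2 m1 m2 c t : ℝ) (h12 : l1 < l2) (hm : m1 ≠ m2)
    (ht : t = (c - m2 * (l1 + l2)) / (m1 - m2))
    (A : Matrix (Fin 2) (Fin 2) ℂ) (hH : A.IsHermitian)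
    (hspec : spectrum ℂ A = {(l1 : ℂ), (l2 : ℂ)})
    (hc : m1 * (A 0 0).re + m2 * (A 1 1).re = c) :
    A 0 0 = (t : ℂ) ∧ A 1 1 = ((l1 + l2 - t : ℝ) : ℂ) ∧ A 0 1 = starRingEnd ℂ (A 1 0) ∧
      Complex.normSq (A 1 0) = (t - l1) * (l2 - t) := by
  have h00 : starRingEnd ℂ (A 0 0) = A 0 0 := by
    have := congrFun (congrFun hH 0) 0
    simpa [Matrix.conjTranspose_apply] using this
  have h11 : starRingEnd ℂ (A 1 1) = A 1 1 := by
    have := congrFun (congrFun hH 1) 1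
    simpa [Matrix.conjTranspose_apply] using this
  have h01 : A 0 1 = starRingEnd ℂ (A 1 0) := by
    have := congrFun (congrFun hH 0) 1
    simpa [Matrix.conjTranspose_apply] using this.symm
  have ha : A 0 0 = ((A 0 0).re : ℂ) := ((Complex.conj_eq_iff_re).1 h00).symm
  have hd : A 1 1 = ((A 1 1).re : ℂ) := ((Complex.conj_eq_iff_re).1 h11).symm
  set a := (A 0 0).re
  set d := (A 1 1).re
  have E1 : ((l1:ℂ) - A 0 0) * ((l1:ℂ) - A 1 1) - A 0 1 * A 1 0 = 0 := by
    rw [← aux_spec, hspec]; left; rfl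
  have E2 : ((l2:ℂ) - A 0 0) * ((l2:ℂ) - A 1 1) - A 0 1 * A 1 0 = 0 := by
    rw [← aux_spec, hspec]; right; rfl
  have hl12 : (l1 : ℂ) ≠ (l2 : ℂ) := by exact_mod_cast h12.ne
  have htr : A 0 0 + A 1 1 = ((l1 : ℂ) + l2) := by
    have h := sub_eq_zero.2 (E1.trans E2.symm)
    have h2 : ((l1:ℂ) - l2) * ((l1 + l2) - (A 0 0 + A 1 1)) = 0 := by linear_combination h
    rcases mul_eq_zero.1 h2 with h' | h'
    · exact absurd (sub_eq_zero.1 h') hl12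
    · linear_combination -h'
  have htrR : a + d = l1 + l2 := by
    have := congrArg Complex.re htr
    simpa [ha, hd, ← Complex.ofReal_add] using by
      rw [ha, hd] at htr
      exact_mod_cast htr
  have hmm : m1 - m2 ≠ 0 := sub_ne_zero.2 hm
  have hat : a = t := by
    rw [ht, eq_comm, div_eq_iff hmm]
    linear_combination m2 * htrR - hc
  have hA00 : A 0 0 = (t : ℂ) := by rw [ha, hat]
  have hA11 : A 1 1 = ((l1 + l2 - t : ℝ) : ℂ) := by
    rw [hd]; norm_cast; linarith
  refine ⟨hA00, hA11, h01, ?_⟩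
  have hns : (Complex.normSq (A 1 0) : ℂ) = ((t - l1) * (l2 - t) : ℝ) := by
    rw [← Complex.mul_conj, ← h01]
    push_cast at hA00 hA11 ⊢
    linear_combination -E1 + ((A 1 1) - (l1:ℂ)) * hA00 + ((t:ℂ) - l1) * hA11
  exact_mod_cast hns

/-- The set of 2×2 complex Hermitian matrices with spectrum `{λ1, λ2}` on which
`μ1·A₀₀ + μ2·A₁₁ = c`, for `c` a regular value with nonempty level set
(equivalently `λ1 < t < λ2` where `t = (c − μ2(λ1+λ2))/(μ1−μ2)`), is homeomorphic
to the unit circle in `ℂ`. -/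
theorem stmt_0 (l1 l2 m1 m2 c : ℝ) (h12 : l1 < l2) (hm : m1 ≠ m2)
    (t : ℝ) (ht : t = (c - m2 * (l1 + l2)) / (m1 - m2))
    (ht1 : l1 < t) (ht2 : t < l2) :
    Nonempty
      ({A : Matrix (Fin 2) (Fin 2) ℂ //
          A.IsHermitian ∧ spectrum ℂ A = {(l1 : ℂ), (l2 : ℂ)} ∧
          m1 * (A 0 0).re + m2 * (A 1 1).re = c} ≃ₜ
        {z : ℂ // ‖z‖ = 1}) := by
  set r : ℝ := Real.sqrt ((t - l1) * (l2 - t)) with hrdef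
  have hrr : (t - l1) * (l2 - t) > 0 := mul_pos (by linarith) (by linarith)
  have hr2 : r ^ 2 = (t - l1) * (l2 - t) := Real.sq_sqrt hrr.le
  have hrpos : 0 < r := Real.sqrt_pos.2 hrr
  have hrne : (r : ℂ) ≠ 0 := by exact_mod_cast hrpos.ne'
  have hmm : m1 - m2 ≠ 0 := sub_ne_zero.2 hm
  -- the map into the circle
  have toCirc : ∀ A : {A : Matrix (Fin 2) (Fin 2) ℂ //
      A.IsHermitian ∧ spectrum ℂ A = {(l1 : ℂ), (l2 : ℂ)} ∧
      m1 * (A 0 0).re + m2 * (A 1 1).re = c}, ‖A.1 1 0 / r‖ = 1 := by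
    rintro ⟨A, hH, hspec, hc⟩
    obtain ⟨_, _, _, hn⟩ := aux_key l1 l2 m1 m2 c t h12 hm ht A hH hspec hc
    have habs : ‖A 1 0‖ = r := by
      rw [Complex.norm_def, hn, hrdef]
    simp only [norm_div, habs, Complex.norm_real, Real.norm_eq_abs, abs_of_pos hrpos]
    field_simp
  -- the matrix from a point on the circle
  set M : {z : ℂ // ‖z‖ = 1} → Matrix (Fin 2) (Fin 2) ℂ := fun z =>
    !![(t : ℂ), (r : ℂ) * starRingEnd ℂ z.1; (r : ℂ) * z.1, ((l1 + l2 - t : ℝ) : ℂ)] with hM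
  have hmem : ∀ z : {z : ℂ // ‖z‖ = 1},
      (M z).IsHermitian ∧ spectrum ℂ (M z) = {(l1 : ℂ), (l2 : ℂ)} ∧
      m1 * ((M z) 0 0).re + m2 * ((M z) 1 1).re = c := by
    rintro ⟨z, hz⟩
    have hzz : z * starRingEnd ℂ z = 1 := by
      rw [Complex.mul_conj]
      norm_cast
      simp [← Complex.sq_norm, hz]
    refine ⟨?_, ?_, ?_⟩
    · ext i j
      fin_cases i <;> fin_cases j <;>
        simp [hM, Matrix.conjTranspose_apply, Complex.conj_ofReal, mul_comm]
    · ext k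
      rw [aux_spec]
      have e00 : (M ⟨z, hz⟩) 0 0 = (t : ℂ) := rfl
      have e01 : (M ⟨z, hz⟩) 0 1 = (r : ℂ) * starRingEnd ℂ z := rfl
      have e10 : (M ⟨z, hz⟩) 1 0 = (r : ℂ) * z := rfl
      have e11 : (M ⟨z, hz⟩) 1 1 = ((l1 + l2 - t : ℝ) : ℂ) := rfl
      have hr2' : (r : ℂ) ^ 2 = ((t : ℂ) - l1) * ((l2 : ℂ) - t) := by
        exact_mod_cast hr2
      have key : (k - (M ⟨z, hz⟩) 0 0) * (k - (M ⟨z, hz⟩) 1 1)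
          - (M ⟨z, hz⟩) 0 1 * (M ⟨z, hz⟩) 1 0 = (k - l1) * (k - l2) := by
        rw [e00, e01, e10, e11]
        push_cast
        linear_combination (-(r:ℂ)^2) * hzz - hr2'
      rw [key]
      constructor
      · intro h
        rcases mul_eq_zero.1 h with h | h
        · left; exact sub_eq_zero.1 h
        · right; exact sub_eq_zero.1 h
      · rintro (h | h) <;> subst h <;> ring
    · have e00 : (M ⟨z, hz⟩) 0 0 = (t : ℂ) := rfl
      have e11 : (M ⟨z, hz⟩) 1 1 = ((l1 + l2 - t : ℝ) : ℂ) := rfl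
      rw [e00, e11, Complex.ofReal_re, Complex.ofReal_re]
      have ht' : t * (m1 - m2) = c - m2 * (l1 + l2) := by
        rw [ht, div_mul_cancel₀ _ hmm]
      linear_combination ht'
  refine ⟨Homeomorph.mk (Equiv.mk
    (fun A => ⟨A.1 1 0 / r, toCirc A⟩)
    (fun z => ⟨M z, hmem z⟩) ?_ ?_) ?_ ?_⟩
  · -- left inverse
    rintro ⟨A, hH, hspec, hc⟩
    obtain ⟨h00, h11, h01, hn⟩ := aux_key l1 l2 m1 m2 c t h12 hm ht A hH hspec hc
    apply Subtype.ext
    show M ⟨A 1 0 / r, _⟩ = A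
    ext i j
    fin_cases i <;> fin_cases j
    · exact h00.symm
    · show (r : ℂ) * starRingEnd ℂ (A 1 0 / r) = A 0 1
      rw [h01, map_div₀, Complex.conj_ofReal]
      field_simp
    · show (r : ℂ) * (A 1 0 / r) = A 1 0
      field_simp
    · exact h11.symm
  · -- right inverse
    rintro ⟨z, hz⟩
    apply Subtype.ext
    show (r : ℂ) * z / r = z
    field_simp
  · -- continuity of toFun
    apply Continuous.subtype_mk
    apply Continuous.div_const
    have h1 : Continuous fun A : Matrix (Fin 2) (Fin 2) ℂ => A 1 0 :=
      (continuous_apply (0 : Fin 2)).comp (continuous_apply (1 : Fin 2))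
    exact h1.comp continuous_subtype_val
  · -- continuity of invFun
    apply Continuous.subtype_mk
    apply continuous_matrix
    intro i j
    fin_cases i <;> fin_cases j
    · exact continuous_const
    · exact continuous_const.mul (Complex.continuous_conj.comp continuous_subtype_val)
    · exact continuous_const.mul continuous_subtype_val
    · exact continuous_const
end

section
/- Let X₁, …, X_d ∈ ℝ^m and λ ∈ ℝ^d. Define Δ = {μ ∈ ℝ^m : ⟨μ, Xⱼ⟩ ≤ λⱼ for all j}, π* : ℝ^m → ℝ^d by π*(μ) = (⟨μ, X₁⟩, …, ⟨μ, X_d⟩), Φ : ℂ^d → ℝ^d by Φ(z)ⱼ = λⱼ − (1/2)|zⱼ|², and M = {z ∈ ℂ^d : Φ(z) ∈ range(π*)}. If Δ is bounded, then M is a compact subset of ℂ^d. -/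
/-- In the quasifold construction, if the polytope `Δ` is bounded then
`M = Φ⁻¹(range π*)` is a compact subset of `ℂ^d`. -/
theorem stmt_10 (d m : ℕ) (X : Fin d → (Fin m → ℝ)) (lam : Fin d → ℝ) :
    let Δ : Set (Fin m → ℝ) := {μ | ∀ j, ∑ i, μ i * X j i ≤ lam j}
    let πs : (Fin m → ℝ) → (Fin d → ℝ) := fun μ j => ∑ i, μ i * X j i
    let Φ : (Fin d → ℂ) → (Fin d → ℝ) :=
      fun z j => lam j - (1 / 2) * ‖z j‖ ^ 2
    let M : Set (Fin d → ℂ) := {z | Φ z ∈ Set.range πs}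
    Bornology.IsBounded Δ → IsCompact M := by
  intro Δ πs Φ M hΔ
  rw [Metric.isCompact_iff_isClosed_bounded]
  constructor
  · -- closedness
    have hrange : Set.range πs =
        (LinearMap.range (Matrix.mulVecLin (Matrix.of X)) : Set (Fin d → ℝ)) := by
      ext v
      simp only [Set.mem_range, SetLike.mem_coe, LinearMap.mem_range]
      constructor
      · rintro ⟨μ, rfl⟩
        exact ⟨μ, by funext j; simp [Matrix.mulVecLin_apply, Matrix.mulVec,
          dotProduct, πs, mul_comm]⟩
      · rintro ⟨μ, rfl⟩
        exact ⟨μ, by funext j; simp [Matrix.mulVecLin_apply, Matrix.mulVec,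
          dotProduct, πs, mul_comm]⟩
    have hclosed : IsClosed (Set.range πs) := by
      rw [hrange]
      exact (LinearMap.range (Matrix.mulVecLin (Matrix.of X))).closed_of_finiteDimensional
    have hΦ : Continuous Φ := by
      apply continuous_pi
      intro j
      have : Continuous fun z : Fin d → ℂ => ‖z j‖ :=
        continuous_norm.comp (continuous_apply j)
      fun_prop
    exact hclosed.preimage hΦ
  · -- boundedness
    obtain ⟨C, hC⟩ := isBounded_iff_forall_norm_le.1 hΔ
    set M0 : ℝ := ∑ j, (2 * |lam j| + |C| * ∑ i, |X j i|) with hM0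
    refine isBounded_iff_forall_norm_le.2 ⟨Real.sqrt (2 * M0), ?_⟩
    intro z hz
    obtain ⟨μ, hμ⟩ := hz
    have hμΔ : μ ∈ Δ := by
      intro j
      have h := congrFun hμ j
      simp only [πs, Φ] at h
      have : (0:ℝ) ≤ (1 / 2) * ‖z j‖ ^ 2 := by positivity
      have := h.le.trans (by linarith : lam j - (1 / 2) * ‖z j‖ ^ 2 ≤ lam j)
      exact this
    have hnormμ : ‖μ‖ ≤ C := hC μ hμΔ
    have hCnn : (0:ℝ) ≤ C := le_trans (norm_nonneg μ) hnormμ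
    have key : ∀ j, |πs μ j| ≤ |lam j| + |C| * ∑ i, |X j i| := by
      intro j
      have h1 : |πs μ j| ≤ ∑ i, |μ i * X j i| := Finset.abs_sum_le_sum_abs _ _
      have h2 : ∀ i, |μ i * X j i| ≤ C * |X j i| := by
        intro i
        rw [abs_mul]
        exact mul_le_mul_of_nonneg_right
          ((norm_le_pi_norm μ i).trans hnormμ) (abs_nonneg _)
      calc |πs μ j| ≤ ∑ i, C * |X j i| :=
            h1.trans (Finset.sum_le_sum fun i _ => h2 i)
        _ = C * ∑ i, |X j i| := by rw [Finset.mul_sum]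
        _ ≤ |lam j| + |C| * ∑ i, |X j i| := by
            rw [abs_of_nonneg hCnn]
            have := abs_nonneg (lam j)
            linarith
    have hterm : ∀ j, lam j - πs μ j ≤ M0 := by
      intro j
      have h1 : lam j - πs μ j ≤ 2 * |lam j| + |C| * ∑ i, |X j i| := by
        have h2 := le_abs_self (lam j)
        have h3 := neg_abs_le (πs μ j)
        linarith [key j]
      refine h1.trans ?_
      rw [hM0]
      apply Finset.single_le_sum (f := fun j => 2 * |lam j| + |C| * ∑ i, |X j i|)
        (fun k _ => by positivity) (Finset.mem_univ j)
    rw [pi_norm_le_iff_of_nonneg (Real.sqrt_nonneg _)]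
    intro j
    have h := congrFun hμ j
    simp only [πs, Φ] at h
    have hsq : ‖z j‖ ^ 2 = 2 * (lam j - πs μ j) := by
      simp only [πs]
      linarith
    have hb : ‖z j‖ ^ 2 ≤ 2 * M0 := by
      rw [hsq]; linarith [hterm j]
    have : ‖z j‖ = ‖z j‖ := rfl
    rw [this]
    calc ‖z j‖ = Real.sqrt (‖z j‖ ^ 2) := by
          rw [Real.sqrt_sq (norm_nonneg _)]
      _ ≤ Real.sqrt (2 * M0) := Real.sqrt_le_sqrt hb
end

section
/- Let X₁, …, X_d ∈ ℝ^m and λ ∈ ℝ^d. Define Δ = {μ ∈ ℝ^m : ⟨μ, Xⱼ⟩ ≤ λⱼ for all j}, π* : ℝ^m → ℝ^d by π*(μ) = (⟨μ, X₁⟩, …, ⟨μ, X_d⟩), Φ : ℂ^d → ℝ^d by Φ(z)ⱼ = λⱼ − (1/2)|zⱼ|², and M = {z ∈ ℂ^d : Φ(z) ∈ range(π*)}. Assume the simplicity condition: for every μ ∈ Δ, the family of vectors {Xⱼ : ⟨μ, Xⱼ⟩ = λⱼ} is linearly independent in ℝ^m. Then for every z ∈ M and every ξ ∈ ℝ^d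 satisfying ∑ⱼ ξⱼ·Xⱼ = 0 (i.e., ξ ∈ ker π) and ξⱼ·zⱼ = 0 for all j, one has ξ = 0. -/
/-- If the polytope `Δ` is simple (at every `μ ∈ Δ` the active constraint vectors
`Xⱼ` are linearly independent), then the infinitesimal action of `𝔫 = ker π` on
`M = Φ⁻¹(range π*)` is free: if `ξ ∈ ker π` and `ξⱼ·zⱼ = 0` for all `j` at some
`z ∈ M`, then `ξ = 0`. -/
theorem stmt_11 (d m : ℕ) (X : Fin d → (Fin m → ℝ)) (lam : Fin d → ℝ)
    (hsimple : ∀ μ ∈ {μ : Fin m → ℝ | ∀ j, ∑ i, μ i * X j i ≤ lam j},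
      LinearIndependent ℝ
        (fun j : {j : Fin d // ∑ i, μ i * X j i = lam j} => X j.1)) :
    ∀ z ∈ {z : Fin d → ℂ |
        (fun j => lam j - (1 / 2) * ‖z j‖ ^ 2) ∈
          Set.range (fun (μ : Fin m → ℝ) (j : Fin d) => ∑ i, μ i * X j i)},
      ∀ ξ : Fin d → ℝ, (∑ j, ξ j • X j = 0) → (∀ j, (ξ j : ℂ) * z j = 0) → ξ = 0 := by
  rintro z ⟨μ, hμ⟩ ξ hker hz
  have hμ' : ∀ j, ∑ i, μ i * X j i = lam j - (1 / 2) * ‖z j‖ ^ 2 :=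
    fun j => congrFun hμ j
  have hΔ : μ ∈ {μ : Fin m → ℝ | ∀ j, ∑ i, μ i * X j i ≤ lam j} := by
    intro j
    rw [hμ' j]
    nlinarith [sq_nonneg ‖z j‖]
  have hLI := hsimple μ hΔ
  rw [Fintype.linearIndependent_iff] at hLI
  have hξ0 : ∀ j, ¬ (∑ i, μ i * X j i = lam j) → ξ j = 0 := by
    intro j hj
    by_contra h
    rcases mul_eq_zero.mp (hz j) with h' | h'
    · exact h (by exact_mod_cast h')
    · apply hj
      rw [hμ' j, h']
      simp
  have hsum : ∑ j : {j : Fin d // ∑ i, μ i * X j i = lam j}, ξ j.1 • X j.1 = 0 := by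
    rw [← hker]
    rw [← Finset.sum_filter_of_ne (p := fun j => ∑ i, μ i * X j i = lam j)
      (fun x _ hx => by
        by_contra hc
        exact hx (by rw [hξ0 x hc, zero_smul]))]
    exact (Finset.sum_subtype
      (s := Finset.univ.filter (fun j => ∑ i, μ i * X j i = lam j))
      (p := fun j => ∑ i, μ i * X j i = lam j)
      (fun x => by simp) (fun j => ξ j • X j)).symm
  have hall := hLI (fun j => ξ j.1) hsum
  funext j
  by_cases hj : ∑ i, μ i * X j i = lam j
  · exact hall ⟨j, hj⟩
  · exact hξ0 j hj
end
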